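/- arXiv:2502.08605 — 2 statements merged into one kernel-verified Lean document; each statement's English description precedes it below -/
import Mathlib

section
/- For an unweighted graph, the Ollivier-Ricci curvature of an edge (x,y), defined as κ(x,y) = 1 - W₁(m_x, m_y)/d(x,y) where m_x is the uniform probability measure on the neighbors of x (with δ=0), satisfies the upper bound κ(x,y) ≤ #(x,y)/max(d_x, d_y), where #(x,y) is the number of triangles containing edge (x,y) and d_x, d_y are the degrees of x and y. -/
open Finset

/-- Wasserstein-1 distance between two finitely-supported measures (given as real-valued
functions) on the vertex set of a graph, with respect to the shortest-path metric,
defined as the infimum of transport costs over all couplings. -/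
noncomputable def W1 {V : Type*} [Fintype V] (G : SimpleGraph V) (μ ν : V → ℝ) : ℝ :=
  sInf { c : ℝ | ∃ π : V → V → ℝ, (∀ a b, 0 ≤ π a b) ∧
    (∀ a, ∑ b, π a b = μ a) ∧ (∀ b, ∑ a, π a b = ν b) ∧
    c = ∑ a, ∑ b, π a b * (G.dist a b : ℝ) }

/-- Uniform probability measure on the neighbours of `x` (lazy parameter δ = 0). -/
noncomputable def mUnif {V : Type*} [Fintype V] [DecidableEq V] (G : SimpleGraph V) [DecidableRel G.Adj]
    (x : V) : V → ℝ :=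
  fun z => if z ∈ G.neighborFinset x then 1 / (G.degree x : ℝ) else 0

/-!
Along the diagonal a coupling `π` of `μ` and `ν` can keep at most `min (μ a) (ν a)` of the mass
in place; everything else travels at least distance one. Hence
`W₁(μ, ν) ≥ 1 - ∑ₐ min (μ a) (ν a)`, and for the uniform measures on the neighbourhoods of
adjacent `x`, `y` the overlap `∑ₐ min (m_x a) (m_y a)` is `#(x,y) / max d_x d_y`.
-/

namespace SimpleGraph

variable {V : Type*} [Fintype V]

section Coupling

variable {μ ν : V → ℝ} {π : V → V → ℝ}

lemma coupling_diag_le_min (hπ : ∀ a b, 0 ≤ π a b) (hrow : ∀ a, ∑ b, π a b = μ a)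
    (hcol : ∀ b, ∑ a, π a b = ν b) (a : V) : π a a ≤ min (μ a) (ν a) :=
  le_min (hrow a ▸ single_le_sum (fun b _ => hπ a b) (mem_univ a))
    (hcol a ▸ single_le_sum (fun b _ => hπ b a) (mem_univ a))

lemma sum_sub_sum_diag_le_sum_mul_dist (G : SimpleGraph V) (hconn : G.Connected)
    (hπ : ∀ a b, 0 ≤ π a b) :
    ∑ a, ∑ b, π a b - ∑ a, π a a ≤ ∑ a, ∑ b, π a b * (G.dist a b : ℝ) := by
  classical
  have hoff : ∀ a b, π a b - (if a = b then π a b else 0) ≤ π a b * (G.dist a b : ℝ) := by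
    intro a b
    by_cases hab : a = b
    · subst hab
      simp
    · have hdist : (1 : ℝ) ≤ G.dist a b := by exact_mod_cast hconn.pos_dist_of_ne hab
      simpa [hab] using le_mul_of_one_le_right (hπ a b) hdist
  calc ∑ a, ∑ b, π a b - ∑ a, π a a
      = ∑ a, ∑ b, (π a b - if a = b then π a b else 0) := by
        simp only [sum_sub_distrib, sum_ite_eq, mem_univ, if_true]
    _ ≤ _ := sum_le_sum fun a _ => sum_le_sum fun b _ => hoff a b

lemma one_sub_sum_min_le_W1 (G : SimpleGraph V) (hconn : G.Connected)
    (hμ : ∀ a, 0 ≤ μ a) (hν : ∀ a, 0 ≤ ν a) (hμ1 : ∑ a, μ a = 1) (hν1 : ∑ a, ν a = 1) :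
    1 - ∑ a, min (μ a) (ν a) ≤ W1 G μ ν := by
  apply le_csInf
  · refine ⟨_, fun a b => μ a * ν b, fun a b => mul_nonneg (hμ a) (hν b), ?_, ?_, rfl⟩
    · intro a; rw [← mul_sum, hν1, mul_one]
    · intro b; rw [← sum_mul, hμ1, one_mul]
  · rintro c ⟨π, hπ, hrow, hcol, rfl⟩
    have hmass : ∑ a, ∑ b, π a b = 1 := by simp only [hrow, hμ1]
    have hdiag : ∑ a, π a a ≤ ∑ a, min (μ a) (ν a) :=
      sum_le_sum fun a _ => coupling_diag_le_min hπ hrow hcol a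
    linarith [sum_sub_sum_diag_le_sum_mul_dist G hconn hπ]

end Coupling

variable [DecidableEq V] (G : SimpleGraph V) [DecidableRel G.Adj]

lemma mUnif_nonneg (x a : V) : 0 ≤ mUnif G x a := by
  unfold mUnif; split_ifs <;> positivity

lemma sum_mUnif {x : V} (hx : 0 < G.degree x) : ∑ a, mUnif G x a = 1 := by
  have hx' : (G.degree x : ℝ) ≠ 0 := by positivity
  simp only [mUnif, sum_ite_mem, univ_inter, sum_const, card_neighborFinset_eq_degree,
    nsmul_eq_mul, one_div, mul_inv_cancel₀ hx']

lemma min_mUnif (x y a : V) :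
    min (mUnif G x a) (mUnif G y a) =
      if a ∈ G.neighborFinset x ∩ G.neighborFinset y then
        1 / (max (G.degree x) (G.degree y) : ℝ) else 0 := by
  simp only [mUnif, mem_inter]
  by_cases hx : a ∈ G.neighborFinset x <;> by_cases hy : a ∈ G.neighborFinset y <;>
    simp only [hx, hy, and_true, and_false, if_true, if_false]
  · have hdx : (0 : ℝ) < G.degree x := by
      exact_mod_cast G.degree_pos_iff_exists_adj x |>.mpr ⟨a, (G.mem_neighborFinset x a).1 hx⟩
    have hdy : (0 : ℝ) < G.degree y := by
      exact_mod_cast G.degree_pos_iff_exists_adj y |>.mpr ⟨a, (G.mem_neighborFinset y a).1 hy⟩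
    rcases le_total (G.degree x : ℝ) (G.degree y) with h | h
    · rw [max_eq_right h, min_eq_right (one_div_le_one_div_of_le hdx h)]
    · rw [max_eq_left h, min_eq_left (one_div_le_one_div_of_le hdy h)]
  · exact min_eq_right (by positivity)
  · exact min_eq_left (by positivity)
  · exact min_self 0

lemma sum_min_mUnif (x y : V) :
    ∑ a, min (mUnif G x a) (mUnif G y a) =
      ((G.neighborFinset x ∩ G.neighborFinset y).card : ℝ) /
        (max (G.degree x) (G.degree y) : ℝ) := by
  simp only [min_mUnif, sum_ite_mem, univ_inter, sum_const, nsmul_eq_mul, mul_one_div]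

end SimpleGraph

/-- Jost–Liu upper bound: for an edge (x,y) of a finite simple connected unweighted graph,
the Ollivier-Ricci curvature κ(x,y) = 1 - W₁(m_x, m_y)/d(x,y) (here d(x,y) = 1) is at most
#(x,y)/max(d_x, d_y), where #(x,y) is the number of triangles containing the edge. -/
theorem orc_upper_bound {V : Type*} [Fintype V] [DecidableEq V]
    (G : SimpleGraph V) [DecidableRel G.Adj] (hconn : G.Connected)
    (x y : V) (hxy : G.Adj x y) :
    1 - W1 G (mUnif G x) (mUnif G y) / (G.dist x y : ℝ) ≤
      ((G.neighborFinset x ∩ G.neighborFinset y).card : ℝ) /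
        (max (G.degree x) (G.degree y) : ℝ) := by
  have hdx : 0 < G.degree x := G.degree_pos_iff_exists_adj x |>.mpr ⟨y, hxy⟩
  have hdy : 0 < G.degree y := G.degree_pos_iff_exists_adj y |>.mpr ⟨x, hxy.symm⟩
  have hW1 := G.one_sub_sum_min_le_W1 hconn (G.mUnif_nonneg x) (G.mUnif_nonneg y)
    (G.sum_mUnif hdx) (G.sum_mUnif hdy)
  rw [SimpleGraph.dist_eq_one_iff_adj.mpr hxy, Nat.cast_one, div_one, ← G.sum_min_mUnif]
  linarith
end

section
/- For an unweighted graph, the Ollivier-Ricci curvature of an edge (x,y) satisfies the lower bound κ(x,y) ≥ -(1 - 1/d_x - 1/d_y - #(x,y)/min(d_x,d_y))₊ - (1 - 1/d_x - 1/d_y - #(x,y)/max(d_x,d_y))₊ + #(x,y)/max(d_x,d_y), where (a)₊ = max(a,0). -/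
open Finset

/-!
Assume `d_x ≤ d_y` (transposing a transport plan handles the other case) and put `p = 1/d_x`,
`q = 1/d_y`, `t = #(x,y)`. Transport `m_x` to `m_y` as follows: mass `q` stays on each common
neighbour, mass `q` is brought to `x`, which is at distance 1 from all of `N(x)`, and the remaining
mass `1 - q - tq` is spread uniformly over the other neighbours of `y`. Every vertex of `N(y)` is
within distance `1`, `2`, `3` of `y`, of a common neighbour, and of any other neighbour of `x`
respectively, so the mass sent to `x` is taken from the farthest of these layers first. What is
left in the layers at distance `≥ 2` and `3` is then `(1 - p - q - tq)₊` and `(1 - p - q - tp)₊`,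
and the plan costs `q + (1 - q - tq) + (1 - p - q - tq)₊ + (1 - p - q - tp)₊`.
-/

section

variable {V : Type*} [Fintype V]

def TransportableAtCost (G : SimpleGraph V) (μ ν : V → ℝ) (C : ℝ) : Prop :=
  ∃ π : V → V → ℝ, (∀ a b, 0 ≤ π a b) ∧ (∀ a, ∑ b, π a b = μ a) ∧ (∀ b, ∑ a, π a b = ν b) ∧
    ∑ a, ∑ b, π a b * (G.dist a b : ℝ) ≤ C

namespace TransportableAtCost

variable {G : SimpleGraph V} {μ ν μ' ν' : V → ℝ} {C C' : ℝ}

theorem W1_le (h : TransportableAtCost G μ ν C) : W1 G μ ν ≤ C := by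
  obtain ⟨π, hπ, hrow, hcol, hcost⟩ := h
  refine le_trans (csInf_le ⟨0, ?_⟩ ⟨π, hπ, hrow, hcol, rfl⟩) hcost
  rintro _ ⟨π', hπ', -, -, rfl⟩
  exact sum_nonneg fun a _ => sum_nonneg fun b _ => mul_nonneg (hπ' a b) (Nat.cast_nonneg _)

theorem mono (h : TransportableAtCost G μ ν C) (hC : C ≤ C') :
    TransportableAtCost G μ ν C' := by
  obtain ⟨π, hπ, hrow, hcol, hcost⟩ := h
  exact ⟨π, hπ, hrow, hcol, hcost.trans hC⟩

theorem symm (h : TransportableAtCost G μ ν C) : TransportableAtCost G ν μ C := by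
  obtain ⟨π, hπ, hrow, hcol, hcost⟩ := h
  refine ⟨fun a b => π b a, fun a b => hπ b a, hcol, hrow, ?_⟩
  rw [sum_comm]
  simpa only [G.dist_comm] using hcost

theorem add (h : TransportableAtCost G μ ν C) (h' : TransportableAtCost G μ' ν' C') :
    TransportableAtCost G (μ + μ') (ν + ν') (C + C') := by
  obtain ⟨π, hπ, hrow, hcol, hcost⟩ := h
  obtain ⟨π', hπ', hrow', hcol', hcost'⟩ := h'
  refine ⟨π + π', fun a b => add_nonneg (hπ a b) (hπ' a b), fun a => ?_, fun b => ?_, ?_⟩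
  · simp only [Pi.add_apply, sum_add_distrib, hrow, hrow']
  · simp only [Pi.add_apply, sum_add_distrib, hcol, hcol']
  · simp only [Pi.add_apply, add_mul, sum_add_distrib]
    exact add_le_add hcost hcost'

end TransportableAtCost

theorem transportableAtCost_self [DecidableEq V] (G : SimpleGraph V) {μ : V → ℝ}
    (hμ : ∀ u, 0 ≤ μ u) : TransportableAtCost G μ μ 0 := by
  refine ⟨fun a b => if a = b then μ a else 0, fun a b => ite_nonneg (hμ a) le_rfl,
    fun a => ?_, fun b => ?_, ?_⟩
  · simp
  · simp
  · simp [ite_mul]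

theorem transportableAtCost_of_dist_le (G : SimpleGraph V) {μ ν c : V → ℝ}
    (hμ : ∀ u, 0 ≤ μ u) (hν : ∀ v, 0 ≤ ν v) (hsum : ∑ u, μ u = ∑ v, ν v)
    (hc : ∀ u v, μ u ≠ 0 → ν v ≠ 0 → (G.dist u v : ℝ) ≤ c u) :
    TransportableAtCost G μ ν (∑ u, μ u * c u) := by
  set M := ∑ v, ν v
  have hrow (u : V) : ∑ v, μ u * ν v / M = μ u := by
    rw [← sum_div, ← mul_sum]
    rcases eq_or_ne M 0 with hM | hM
    · simp [(sum_eq_zero_iff_of_nonneg fun u _ => hμ u).1 (hsum.trans hM) u (mem_univ u)]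
    · exact mul_div_cancel_right₀ _ hM
  refine ⟨fun u v => μ u * ν v / M, fun u v => ?_, hrow, fun v => ?_, ?_⟩
  · exact div_nonneg (mul_nonneg (hμ u) (hν v)) (sum_nonneg fun v _ => hν v)
  · rw [← sum_div, ← sum_mul, hsum]
    rcases eq_or_ne M 0 with hM | hM
    · simp [(sum_eq_zero_iff_of_nonneg fun v _ => hν v).1 hM v (mem_univ v)]
    · exact mul_div_cancel_left₀ _ hM
  · calc ∑ u, ∑ v, μ u * ν v / M * (G.dist u v : ℝ) ≤ ∑ u, ∑ v, μ u * ν v / M * c u := by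
          refine sum_le_sum fun u _ => sum_le_sum fun v _ => ?_
          by_cases hu : μ u = 0
          · simp [hu]
          by_cases hv : ν v = 0
          · simp [hv]
          exact mul_le_mul_of_nonneg_left (hc u v hu hv)
            (div_nonneg (mul_nonneg (hμ u) (hν v)) (sum_nonneg fun v _ => hν v))
      _ = ∑ u, μ u * c u := by simp_rw [← sum_mul, hrow]

/-- The greedy choice: mass `q` is removed from layers of masses `F₃`, `F₂`, `F₁` in this order,
`lₖ` being the fraction removed from `Fₖ`; a unit left in layer `k` costs `k`. -/
theorem exists_greedy_split {F₁ F₂ F₃ q : ℝ} (hq : 0 < q) (hF₂ : 0 ≤ F₂)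
    (hqF : q ≤ F₁ + F₂ + F₃) :
    ∃ l₁ ∈ Set.Icc (0 : ℝ) 1, ∃ l₂ ∈ Set.Icc (0 : ℝ) 1, ∃ l₃ ∈ Set.Icc (0 : ℝ) 1,
      l₁ * F₁ + l₂ * F₂ + l₃ * F₃ = q ∧
      (1 - l₁) * F₁ + 2 * ((1 - l₂) * F₂) + 3 * ((1 - l₃) * F₃) ≤
        F₁ + F₂ + F₃ - q + max (F₂ + F₃ - q) 0 + max (F₃ - q) 0 := by
  rcases le_or_gt q F₃ with h₃ | h₃
  · have hF₃ : 0 < F₃ := hq.trans_le h₃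
    refine ⟨0, by simp, 0, by simp, q / F₃, ⟨by positivity, div_le_one_of_le₀ h₃ hF₃.le⟩, ?_, ?_⟩
    · field_simp
      ring
    · rw [max_eq_left (by linarith), max_eq_left (by linarith)]
      linarith [div_mul_cancel₀ q hF₃.ne']
  rcases le_or_gt q (F₂ + F₃) with h₂ | h₂
  · have hF₂ : 0 < F₂ := by linarith
    refine ⟨0, by simp, (q - F₃) / F₂,
      ⟨div_nonneg (by linarith) hF₂.le, (div_le_one₀ hF₂).2 (by linarith)⟩, 1, by simp, ?_, ?_⟩
    · field_simp
      ring
    · rw [max_eq_left (by linarith), max_eq_right (by linarith)]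
      linarith [div_mul_cancel₀ (q - F₃) hF₂.ne']
  · have hF₁ : 0 < F₁ := by linarith
    refine ⟨(q - F₂ - F₃) / F₁, ⟨div_nonneg (by linarith) hF₁.le, (div_le_one₀ hF₁).2
      (by linarith)⟩, 1, by simp, 1, by simp, ?_, ?_⟩
    · field_simp
      ring
    · rw [max_eq_right (by linarith), max_eq_right (by linarith)]
      linarith [div_mul_cancel₀ (q - F₂ - F₃) hF₁.ne']

noncomputable def jostLiuBound (dx dy t : ℝ) : ℝ :=
  1 + max (1 - 1 / dx - 1 / dy - t / min dx dy) 0 + max (1 - 1 / dx - 1 / dy - t / max dx dy) 0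
    - t / max dx dy

theorem jostLiuBound_comm (dx dy t : ℝ) : jostLiuBound dx dy t = jostLiuBound dy dx t := by
  rw [jostLiuBound, jostLiuBound, min_comm dx, max_comm dx, sub_right_comm 1 (1 / dx)]

section layers

variable [DecidableEq V] (G : SimpleGraph V) [DecidableRel G.Adj] {x y : V}

/-- When `x ~ y`, the three layers `{y}`, `N(x) ∩ N(y)` and the other neighbours of `x` lie
within distance `1`, `2`, `3` of every neighbour of `y`. -/
def layerFun (x y : V) (c₁ c₂ c₃ : ℝ) (u : V) : ℝ :=
  if u ∈ G.neighborFinset x then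
    (if u = y then c₁ else if u ∈ G.neighborFinset y then c₂ else c₃)
  else 0

variable {G}

theorem layerFun_add (a₁ a₂ a₃ b₁ b₂ b₃ : ℝ) :
    layerFun G x y a₁ a₂ a₃ + layerFun G x y b₁ b₂ b₃ =
      layerFun G x y (a₁ + b₁) (a₂ + b₂) (a₃ + b₃) := by
  ext u
  simp only [Pi.add_apply, layerFun]
  split_ifs <;> ring

theorem layerFun_mul_layerFun (a₁ a₂ a₃ b₁ b₂ b₃ : ℝ) (u : V) :
    layerFun G x y a₁ a₂ a₃ u * layerFun G x y b₁ b₂ b₃ u =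
      layerFun G x y (a₁ * b₁) (a₂ * b₂) (a₃ * b₃) u := by
  simp only [layerFun]
  split_ifs <;> ring

theorem layerFun_nonneg {c₁ c₂ c₃ : ℝ} (h₁ : 0 ≤ c₁) (h₂ : 0 ≤ c₂) (h₃ : 0 ≤ c₃) (u : V) :
    0 ≤ layerFun G x y c₁ c₂ c₃ u := by
  simp only [layerFun]
  split_ifs <;> first | assumption | exact le_rfl

theorem mem_neighborFinset_of_layerFun_ne_zero {c₁ c₂ c₃ : ℝ} {u : V}
    (h : layerFun G x y c₁ c₂ c₃ u ≠ 0) : u ∈ G.neighborFinset x := by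
  by_contra hu
  simp [layerFun, hu] at h

variable (x y) in
theorem mUnif_eq_layerFun :
    mUnif G x = layerFun G x y (1 / G.degree x) (1 / G.degree x) (1 / G.degree x) := by
  ext u
  simp only [mUnif, layerFun, ite_self]

theorem layerFun_zero_comm (c : ℝ) :
    layerFun G x y 0 c 0 = layerFun G y x 0 c 0 := by
  ext u
  simp only [layerFun, SimpleGraph.mem_neighborFinset]
  split_ifs <;> simp_all

theorem card_inter_add_one_le_degree (hxy : G.Adj x y) :
    #(G.neighborFinset x ∩ G.neighborFinset y) + 1 ≤ G.degree x := by
  have hy : y ∉ G.neighborFinset x ∩ G.neighborFinset y := by simp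
  rw [← card_insert_of_notMem hy, ← G.card_neighborFinset_eq_degree]
  exact card_le_card (insert_subset (by simpa using hxy) inter_subset_left)

theorem sum_layerFun (hxy : G.Adj x y) (c₁ c₂ c₃ : ℝ) :
    ∑ u, layerFun G x y c₁ c₂ c₃ u = c₁ + #(G.neighborFinset x ∩ G.neighborFinset y) * c₂ +
      (G.degree x - #(G.neighborFinset x ∩ G.neighborFinset y) - 1) * c₃ := by
  have hsplit (u : V) : layerFun G x y c₁ c₂ c₃ u =
      (if u ∈ G.neighborFinset x then c₃ else 0) +
      (if u ∈ G.neighborFinset x ∩ G.neighborFinset y then c₂ - c₃ else 0) +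
      (if u = y then c₁ - c₃ else 0) := by
    simp only [layerFun, mem_inter]
    split_ifs <;> simp_all
  simp only [hsplit, sum_add_distrib, sum_ite_mem, univ_inter, sum_const, sum_ite_eq',
    mem_univ, if_true, G.card_neighborFinset_eq_degree, nsmul_eq_mul]
  ring

theorem dist_le_layerFun (hxy : G.Adj x y) {u v : V} (hu : u ∈ G.neighborFinset x)
    (hv : v ∈ G.neighborFinset y) : (G.dist u v : ℝ) ≤ layerFun G x y 1 2 3 u := by
  rw [SimpleGraph.mem_neighborFinset] at hu hv
  simp only [layerFun, SimpleGraph.mem_neighborFinset, if_pos hu]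
  split_ifs with huy huy'
  · rw [huy, SimpleGraph.dist_eq_one_iff_adj.2 hv, Nat.cast_one]
  · exact_mod_cast G.dist_le (.cons huy'.symm hv.toWalk)
  · exact_mod_cast G.dist_le (.cons hu.symm (.cons hxy hv.toWalk))

theorem transportableAtCost_to_layerFun_endpoint (hxy : G.Adj x y) {μ : V → ℝ}
    (hμ : ∀ u, 0 ≤ μ u) (hsupp : ∀ u, μ u ≠ 0 → u ∈ G.neighborFinset x) :
    TransportableAtCost G μ (layerFun G y x (∑ u, μ u) 0 0) (∑ u, μ u) := by
  have hm : 0 ≤ ∑ u, μ u := sum_nonneg fun u _ => hμ u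
  have hsum : ∑ u, layerFun G y x (∑ u, μ u) 0 0 u = ∑ u, μ u := by
    simp [sum_layerFun hxy.symm]
  simpa only [mul_one] using transportableAtCost_of_dist_le G (c := fun _ => 1) hμ
    (layerFun_nonneg hm le_rfl le_rfl) hsum.symm fun u v hu hv => by
      have hvx : v = x := by
        by_contra hvx
        simp [layerFun, hvx] at hv
      rw [hvx, G.dist_comm, SimpleGraph.dist_eq_one_iff_adj.2 (by simpa using hsupp u hu),
        Nat.cast_one]

theorem transportableAtCost_of_neighborFinset (hxy : G.Adj x y) {μ ν : V → ℝ}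
    (hμ : ∀ u, 0 ≤ μ u) (hν : ∀ v, 0 ≤ ν v) (hμsupp : ∀ u, μ u ≠ 0 → u ∈ G.neighborFinset x)
    (hνsupp : ∀ v, ν v ≠ 0 → v ∈ G.neighborFinset y) (hsum : ∑ u, μ u = ∑ v, ν v) :
    TransportableAtCost G μ ν (∑ u, μ u * layerFun G x y 1 2 3 u) :=
  transportableAtCost_of_dist_le G hμ hν hsum fun _ _ hu hv =>
    dist_le_layerFun hxy (hμsupp _ hu) (hνsupp _ hv)

theorem transportableAtCost_layerFun_split (hxy : G.Adj x y) {c : ℝ} (hc : 0 ≤ c)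
    {ξ β : V → ℝ} (hξ : ∀ u, 0 ≤ ξ u) (hβ : ∀ u, 0 ≤ β u)
    (hξsupp : ∀ u, ξ u ≠ 0 → u ∈ G.neighborFinset x)
    (hβsupp : ∀ u, β u ≠ 0 → u ∈ G.neighborFinset x) (hξsum : ∑ u, ξ u = c)
    (hβsum : ∑ u, β u = ∑ v, layerFun G y x 0 0 c v) :
    TransportableAtCost G (layerFun G x y 0 c 0 + ξ + β) (layerFun G y x c c c)
      (c + ∑ u, β u * layerFun G x y 1 2 3 u) := by
  have hstay : TransportableAtCost G (layerFun G x y 0 c 0) (layerFun G y x 0 c 0) 0 := by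
    rw [layerFun_zero_comm]
    exact transportableAtCost_self G (layerFun_nonneg le_rfl hc le_rfl)
  have hto_x : TransportableAtCost G ξ (layerFun G y x c 0 0) c := by
    simpa only [hξsum] using transportableAtCost_to_layerFun_endpoint hxy hξ hξsupp
  have hspread := transportableAtCost_of_neighborFinset hxy hβ
    (layerFun_nonneg le_rfl le_rfl hc) hβsupp
    (fun _ => mem_neighborFinset_of_layerFun_ne_zero) hβsum
  have hν : layerFun G y x c c c =
      layerFun G y x 0 c 0 + layerFun G y x c 0 0 + layerFun G y x 0 0 c := by
    simp only [layerFun_add, zero_add, add_zero]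
  rw [hν]
  simpa only [zero_add] using (hstay.add hto_x).add hspread

theorem transportableAtCost_mUnif (hxy : G.Adj x y) (hdeg : G.degree x ≤ G.degree y) :
    TransportableAtCost G (mUnif G x) (mUnif G y)
      (jostLiuBound (G.degree x) (G.degree y) #(G.neighborFinset x ∩ G.neighborFinset y)) := by
  have htx : (#(G.neighborFinset x ∩ G.neighborFinset y) + 1 : ℝ) ≤ G.degree x := by
    exact_mod_cast card_inter_add_one_le_degree hxy
  have hty : (#(G.neighborFinset x ∩ G.neighborFinset y) + 1 : ℝ) ≤ G.degree y := by
    rw [inter_comm]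
    exact_mod_cast card_inter_add_one_le_degree hxy.symm
  have hdeg' : (G.degree x : ℝ) ≤ G.degree y := by exact_mod_cast hdeg
  set t : ℝ := ((G.neighborFinset x ∩ G.neighborFinset y).card : ℝ) with ht_def
  rw [jostLiuBound, min_eq_left hdeg', max_eq_right hdeg', div_eq_mul_one_div t,
    div_eq_mul_one_div t]
  have hpx : G.degree x * (1 / G.degree x : ℝ) = 1 := mul_one_div_cancel (by linarith)
  have hqy : G.degree y * (1 / G.degree y : ℝ) = 1 := mul_one_div_cancel (by linarith)
  have hq : 0 < 1 / (G.degree y : ℝ) := one_div_pos.2 (by linarith)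
  have hqp : 1 / (G.degree y : ℝ) ≤ 1 / G.degree x := one_div_le_one_div_of_le (by linarith) hdeg'
  set p : ℝ := 1 / G.degree x
  set q : ℝ := 1 / G.degree y
  have hp : 0 ≤ p := hq.le.trans hqp
  obtain ⟨l₁, hl₁, l₂, hl₂, l₃, hl₃, hsum, hcost⟩ :=
    exists_greedy_split (F₁ := p) (F₂ := t * (p - q)) (F₃ := (G.degree x - t - 1) * p) hq
      (mul_nonneg (Nat.cast_nonneg _) (sub_nonneg.2 hqp)) (by nlinarith)
  have hmx : mUnif G x = layerFun G x y 0 q 0 + layerFun G x y (l₁ * p) (l₂ * (p - q)) (l₃ * p)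
      + layerFun G x y ((1 - l₁) * p) ((1 - l₂) * (p - q)) ((1 - l₃) * p) := by
    rw [mUnif_eq_layerFun x y, layerFun_add, layerFun_add]
    congr 1 <;> ring
  rw [hmx, mUnif_eq_layerFun y x]
  refine (transportableAtCost_layerFun_split hxy hq.le
    (layerFun_nonneg (mul_nonneg hl₁.1 hp) (mul_nonneg hl₂.1 (sub_nonneg.2 hqp))
      (mul_nonneg hl₃.1 hp))
    (layerFun_nonneg (mul_nonneg (sub_nonneg.2 hl₁.2) hp)
      (mul_nonneg (sub_nonneg.2 hl₂.2) (sub_nonneg.2 hqp)) (mul_nonneg (sub_nonneg.2 hl₃.2) hp))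
    (fun _ => mem_neighborFinset_of_layerFun_ne_zero)
    (fun _ => mem_neighborFinset_of_layerFun_ne_zero) ?_ ?_).mono ?_
  · rw [sum_layerFun hxy]
    linear_combination hsum
  · rw [sum_layerFun hxy, sum_layerFun hxy.symm, inter_comm (G.neighborFinset y)]
    linear_combination -hsum + hpx - hqy
  · simp only [layerFun_mul_layerFun, sum_layerFun hxy, ← ht_def]
    have e₃ : (G.degree x - t - 1) * p - q = 1 - p - q - t * p := by linear_combination hpx
    have e₂ : t * (p - q) + (G.degree x - t - 1) * p - q = 1 - p - q - t * q := by
      linear_combination hpx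
    rw [e₂, e₃] at hcost
    linarith

theorem W1_mUnif_le_jostLiuBound (hxy : G.Adj x y) :
    W1 G (mUnif G x) (mUnif G y) ≤
      jostLiuBound (G.degree x) (G.degree y) #(G.neighborFinset x ∩ G.neighborFinset y) := by
  rcases le_total (G.degree x) (G.degree y) with h | h
  · exact (transportableAtCost_mUnif hxy h).W1_le
  · rw [jostLiuBound_comm, inter_comm]
    exact (transportableAtCost_mUnif hxy.symm h).symm.W1_le

end layers

end

theorem orc_lower_bound_general {V : Type*} [Fintype V] [DecidableEq V]
    (G : SimpleGraph V) [DecidableRel G.Adj]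
    (x y : V) (hxy : G.Adj x y) :
    let dx : ℝ := (G.degree x : ℝ)
    let dy : ℝ := (G.degree y : ℝ)
    let tri : ℝ := ((G.neighborFinset x ∩ G.neighborFinset y).card : ℝ)
    1 - W1 G (mUnif G x) (mUnif G y) ≥
      -(max (1 - 1/dx - 1/dy - tri / min dx dy) 0)
      - (max (1 - 1/dx - 1/dy - tri / max dx dy) 0)
      + tri / max dx dy := by
  intro dx dy tri
  have h := W1_mUnif_le_jostLiuBound hxy
  rw [jostLiuBound] at h
  linarith

/-- Jost–Liu lower bound for the Ollivier-Ricci curvature κ(x,y) = 1 - W₁(m_x, m_y) of an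
edge (x,y): κ(x,y) ≥ -(1 - 1/d_x - 1/d_y - #(x,y)/(d_x ⊓ d_y))₊
- (1 - 1/d_x - 1/d_y - #(x,y)/(d_x ⊔ d_y))₊ + #(x,y)/(d_x ⊔ d_y). -/
theorem orc_lower_bound {V : Type*} [Fintype V] [DecidableEq V]
    (G : SimpleGraph V) [DecidableRel G.Adj] (hconn : G.Connected)
    (x y : V) (hxy : G.Adj x y) :
    let dx : ℝ := (G.degree x : ℝ)
    let dy : ℝ := (G.degree y : ℝ)
    let tri : ℝ := ((G.neighborFinset x ∩ G.neighborFinset y).card : ℝ)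
    1 - W1 G (mUnif G x) (mUnif G y) ≥
      -(max (1 - 1/dx - 1/dy - tri / min dx dy) 0)
      - (max (1 - 1/dx - 1/dy - tri / max dx dy) 0)
      + tri / max dx dy :=
  orc_lower_bound_general G x y hxy
end
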